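/- arXiv:1501.02871 — 2 statements merged into one kernel-verified Lean document; each statement's English description precedes it below -/
import Mathlib

section
/- For all positive integers n, m and nonnegative integers s, r, a partially symmetric tensor G = (g_{ijkl}) belongs to C_{n,m}^{s,r} if and only if for all ξ ∈ I(n,s+2) and ζ ∈ I(m,r+2): Σ_{i,j=1}^n Σ_{k,l=1}^m g_{ijkl} ξ_i ξ_j ζ_k ζ_l − Σ_{i=1}^n ξ_i (Σ_{k,l=1}^m g_{iikl} ζ_k ζ_l) − Σ_{k=1}^m ζ_k (Σ_{i,j=1}^n g_{ijkk} ξ_i ξ_j) + Σ_{i=1}^n Σ_{k=1}^m g_{iikk} ξ_i ζ_k ≥ 0. In other words, C_{n,m}^{s,r} admits this polyhedral representation by finitely many linear inequalities. -/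
/-!
Multiplying by a variable shifts coefficients:
`a! · [x^a] (X_v p) = a_v · (a - e_v)! · [x^(a - e_v)] p`, where `a! = ∏ a_i!`.
Peeling off the four variables of each monomial of `p_G` and using the multinomial theorem for
`(Σ x)^s` and `(Σ y)^r` gives
`a! b! · [x^a y^b] (p_G (Σ x)^s (Σ y)^r) = s! r! Σ g_ijkl (a_i a_j - δ_ij a_i) (b_k b_l - δ_kl b_k)`
when `|a| = s + 2` and `|b| = r + 2`, and `0` otherwise. Expanded, the right-hand side is the linear
form of the statement at `(ξ, ζ) = (a, b)`, so every coefficient has the sign of one of these forms.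
-/

open MvPolynomial

/-- The bi-quadratic form `p_G` as a polynomial in the variables `x_1,…,x_n,y_1,…,y_m`. -/
noncomputable def biQuadPoly {n m : ℕ} (G : Fin n → Fin n → Fin m → Fin m → ℝ) :
    MvPolynomial (Fin n ⊕ Fin m) ℝ :=
  ∑ i, ∑ j, ∑ k, ∑ l, C (G i j k l) *
    X (Sum.inl i) * X (Sum.inl j) * X (Sum.inr k) * X (Sum.inr l)

open Finset Nat

section
variable {σ : Type*} [DecidableEq σ]

theorem Finsupp.cast_mul_tsub_single_apply {R : Type*} [CommRing R] (μ : σ →₀ ℕ) (i j : σ) :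
    (μ i : R) * ((μ - single i 1 : σ →₀ ℕ) j : ℕ) = μ i * μ j - if i = j then (μ i : R) else 0 := by
  by_cases hij : i = j
  · subst hij
    rcases Nat.eq_zero_or_pos (μ i) with h | h
    · simp [h]
    · simp [Nat.cast_sub h]
      ring
  · simp [hij]

variable [Fintype σ] {μ : σ →₀ ℕ} {v : σ}

theorem Finsupp.prod_factorial_eq_mul_prod_factorial_tsub_single (hv : μ v ≠ 0) :
    ∏ w, (μ w)! = μ v * ∏ w, ((μ - single v 1 : σ →₀ ℕ) w)! := by
  have hrest : ∏ w ∈ univ.erase v, ((μ - single v 1 : σ →₀ ℕ) w)! = ∏ w ∈ univ.erase v, (μ w)! :=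
    Finset.prod_congr rfl fun w hw => by simp [Ne.symm (ne_of_mem_erase hw)]
  rw [← Finset.mul_prod_erase univ _ (mem_univ v), ← Finset.mul_prod_erase univ _ (mem_univ v),
    hrest, ← mul_assoc]
  simp [Nat.mul_factorial_pred hv]

theorem Finsupp.sum_tsub_single_add_one (hv : μ v ≠ 0) :
    ∑ w, (μ - single v 1 : σ →₀ ℕ) w + 1 = ∑ w, μ w := by
  have hrest : ∑ w ∈ univ.erase v, (μ - single v 1 : σ →₀ ℕ) w = ∑ w ∈ univ.erase v, μ w :=
    Finset.sum_congr rfl fun w hw => by simp [Ne.symm (ne_of_mem_erase hw)]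
  rw [← Finset.add_sum_erase univ _ (mem_univ v), ← Finset.add_sum_erase univ _ (mem_univ v),
    hrest]
  simp
  omega

end

namespace MvPolynomial

variable {R : Type*}

theorem coeff_rename_inl_mul_rename_inr [CommSemiring R] {α β : Type*} (p : MvPolynomial α R)
    (q : MvPolynomial β R) (μ : α ⊕ β →₀ ℕ) :
    coeff μ (rename Sum.inl p * rename Sum.inr q) =
      coeff (Finsupp.sumFinsuppEquivProdFinsupp μ).1 p *
        coeff (Finsupp.sumFinsuppEquivProdFinsupp μ).2 q := by
  classical
  induction p using MvPolynomial.induction_on' with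
  | add p p' hp hp' => simp only [map_add, add_mul, coeff_add, hp, hp']
  | monomial d a =>
  induction q using MvPolynomial.induction_on' with
  | add q q' hq hq' => simp only [map_add, mul_add, coeff_add, hq, hq']
  | monomial e b =>
    have hde : d.mapDomain Sum.inl + e.mapDomain Sum.inr = Finsupp.sumElim d e := by
      ext (x | y) <;> simp [Finsupp.mapDomain_apply, Finsupp.mapDomain_of_notMem_range,
        Sum.inl_injective, Sum.inr_injective]
    have hμ : Finsupp.sumElim d e = μ ↔ d = (Finsupp.sumFinsuppEquivProdFinsupp μ).1 ∧
        e = (Finsupp.sumFinsuppEquivProdFinsupp μ).2 :=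
      (Finsupp.sumFinsuppEquivProdFinsupp.symm_apply_eq (x := (d, e))).trans Prod.ext_iff
    rw [rename_monomial, rename_monomial, monomial_mul, hde, coeff_monomial, coeff_monomial,
      coeff_monomial]
    simp only [hμ, ite_and, ite_mul, mul_ite, zero_mul, mul_zero]
    split_ifs <;> rfl

variable {σ : Type*} [Fintype σ]

theorem prod_factorial_mul_coeff_sum_X_pow [CommSemiring R] (μ : σ →₀ ℕ) (s : ℕ) :
    ((∏ w, (μ w)! : ℕ) : R) * coeff μ ((∑ w, X w) ^ s) =
      if ∑ w, μ w = s then (s ! : R) else 0 := by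
  rw [coeff_sum_X_pow_of_fintype, Finsupp.sum_fintype _ _ (fun _ => rfl),
    Finsupp.multinomial_eq_of_support_subset (subset_univ _)]
  split_ifs with hs
  · rw [← Nat.cast_mul, Nat.multinomial_spec, hs]
  · simp

variable [DecidableEq σ]

theorem prod_factorial_mul_coeff_X_mul [CommSemiring R] (μ : σ →₀ ℕ) (v : σ)
    (p : MvPolynomial σ R) :
    ((∏ w, (μ w)! : ℕ) : R) * coeff μ (X v * p) =
      μ v * (((∏ w, ((μ - Finsupp.single v 1 : σ →₀ ℕ) w)! : ℕ) : R) *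
        coeff (μ - Finsupp.single v 1) p) := by
  rw [coeff_X_mul']
  by_cases hv : μ v = 0
  · simp [hv]
  · rw [if_pos (Finsupp.mem_support_iff.mpr hv),
      Finsupp.prod_factorial_eq_mul_prod_factorial_tsub_single hv, Nat.cast_mul, mul_assoc]

theorem prod_factorial_mul_coeff_X_mul_X_mul_sum_X_pow [CommRing R] (μ : σ →₀ ℕ) (i j : σ)
    (s : ℕ) :
    ((∏ w, (μ w)! : ℕ) : R) * coeff μ (X i * X j * (∑ w, X w) ^ s) =
      if ∑ w, μ w = s + 2 then
        (s ! : R) * ((μ i : R) * μ j - if i = j then (μ i : R) else 0)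
      else 0 := by
  have hμ'j := Finsupp.cast_mul_tsub_single_apply (R := R) μ i j
  have hdeg : μ i ≠ 0 → ∑ w, (μ - Finsupp.single i 1 : σ →₀ ℕ) w + 1 = ∑ w, μ w :=
    Finsupp.sum_tsub_single_add_one
  rw [mul_assoc, prod_factorial_mul_coeff_X_mul, prod_factorial_mul_coeff_X_mul,
    prod_factorial_mul_coeff_sum_X_pow, ← mul_assoc, hμ'j]
  generalize μ - Finsupp.single i 1 = μ' at hμ'j hdeg ⊢
  by_cases hμ : μ i ≠ 0 ∧ μ' j ≠ 0
  · have hdeg' := Finsupp.sum_tsub_single_add_one hμ.2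
    have hiff : ∑ w, (μ' - Finsupp.single j 1 : σ →₀ ℕ) w = s ↔ ∑ w, μ w = s + 2 := by
      have := hdeg hμ.1
      omega
    simp only [hiff]
    split_ifs <;> ring
  · have hzero : (μ i : R) * μ j - (if i = j then (μ i : R) else 0) = 0 := by
      rw [← hμ'j]
      rcases not_and_or.mp hμ with h | h <;> simp [not_not.mp h]
    simp [hzero]

end MvPolynomial

section
variable {n m : ℕ}

noncomputable def biQuadFallingForm (G : Fin n → Fin n → Fin m → Fin m → ℝ)
    (x : Fin n → ℝ) (y : Fin m → ℝ) : ℝ :=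
  ∑ i, ∑ j, ∑ k, ∑ l, G i j k l * (x i * x j - if i = j then x i else 0) *
    (y k * y l - if k = l then y k else 0)

theorem biQuadFallingForm_eq (G : Fin n → Fin n → Fin m → Fin m → ℝ)
    (x : Fin n → ℝ) (y : Fin m → ℝ) :
    biQuadFallingForm G x y =
      (∑ i, ∑ j, ∑ k, ∑ l, G i j k l * x i * x j * y k * y l)
        - (∑ i, x i * ∑ k, ∑ l, G i i k l * y k * y l)
        - (∑ k, y k * ∑ i, ∑ j, G i j k k * x i * x j)
        + ∑ i, ∑ k, G i i k k * x i * y k := by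
  simp only [biQuadFallingForm, sub_mul, mul_sub, mul_ite, ite_mul, mul_zero, zero_mul,
    Finset.sum_sub_distrib, Finset.sum_ite_irrel, Finset.sum_const_zero, Finset.sum_ite_eq,
    Finset.mem_univ, if_true, Finset.mul_sum]
  simp_rw [Finset.sum_comm (s := (univ : Finset (Fin m))) (t := (univ : Finset (Fin n)))]
  simp only [mul_comm, mul_left_comm]
  ring

theorem biQuadPoly_mul_sum_X_pow_mul_sum_X_pow (G : Fin n → Fin n → Fin m → Fin m → ℝ)
    (s r : ℕ) :
    biQuadPoly G * (∑ i : Fin n, X (Sum.inl i)) ^ s * (∑ j : Fin m, X (Sum.inr j)) ^ r =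
      ∑ i, ∑ j, ∑ k, ∑ l, C (G i j k l) *
        (rename Sum.inl (X i * X j * (∑ t, X t) ^ s) *
          rename Sum.inr (X k * X l * (∑ t, X t) ^ r)) := by
  simp only [biQuadPoly, Finset.sum_mul, map_mul, map_pow, map_sum, rename_X]
  refine Finset.sum_congr rfl fun i _ => Finset.sum_congr rfl fun j _ =>
    Finset.sum_congr rfl fun k _ => Finset.sum_congr rfl fun l _ => by ring

theorem prod_factorial_mul_coeff_biQuadPoly_mul (G : Fin n → Fin n → Fin m → Fin m → ℝ)
    (s r : ℕ) (μ : Fin n ⊕ Fin m →₀ ℕ) :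
    ((∏ i, (μ (Sum.inl i))! : ℕ) : ℝ) * ((∏ k, (μ (Sum.inr k))! : ℕ) : ℝ) *
      coeff μ (biQuadPoly G * (∑ i : Fin n, X (Sum.inl i)) ^ s *
        (∑ j : Fin m, X (Sum.inr j)) ^ r) =
      if ∑ i, μ (Sum.inl i) = s + 2 ∧ ∑ k, μ (Sum.inr k) = r + 2 then
        (s ! : ℝ) * r ! * biQuadFallingForm G (fun i => μ (Sum.inl i)) (fun k => μ (Sum.inr k))
      else 0 := by
  have hterm : ∀ i j k l, ((∏ t, (μ (Sum.inl t))! : ℕ) : ℝ) * ((∏ t, (μ (Sum.inr t))! : ℕ) : ℝ) *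
      coeff μ (C (G i j k l) * (rename Sum.inl (X i * X j * (∑ t, X t) ^ s) *
        rename Sum.inr (X k * X l * (∑ t, X t) ^ r))) =
      G i j k l *
        (if ∑ t, μ (Sum.inl t) = s + 2 then (s ! : ℝ) *
          ((μ (Sum.inl i) : ℝ) * μ (Sum.inl j) - if i = j then (μ (Sum.inl i) : ℝ) else 0)
        else 0) *
        (if ∑ t, μ (Sum.inr t) = r + 2 then (r ! : ℝ) *
          ((μ (Sum.inr k) : ℝ) * μ (Sum.inr l) - if k = l then (μ (Sum.inr k) : ℝ) else 0)
        else 0) := by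
    intro i j k l
    have hx := prod_factorial_mul_coeff_X_mul_X_mul_sum_X_pow (R := ℝ)
      (Finsupp.sumFinsuppEquivProdFinsupp μ).1 i j s
    have hy := prod_factorial_mul_coeff_X_mul_X_mul_sum_X_pow (R := ℝ)
      (Finsupp.sumFinsuppEquivProdFinsupp μ).2 k l r
    simp only [Finsupp.fst_sumFinsuppEquivProdFinsupp,
      Finsupp.snd_sumFinsuppEquivProdFinsupp] at hx hy
    rw [coeff_C_mul, coeff_rename_inl_mul_rename_inr]
    exact (by ring : _ = _ * _ * _).trans (congrArg₂ (G i j k l * · * ·) hx hy)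
  rw [biQuadPoly_mul_sum_X_pow_mul_sum_X_pow, coeff_sum]
  simp only [coeff_sum, Finset.mul_sum, hterm]
  by_cases hx : ∑ i, μ (Sum.inl i) = s + 2
  · by_cases hy : ∑ k, μ (Sum.inr k) = r + 2
    · simp only [hx, hy, and_self, if_true, biQuadFallingForm, Finset.mul_sum]
      refine Finset.sum_congr rfl fun i _ => Finset.sum_congr rfl fun j _ =>
        Finset.sum_congr rfl fun k _ => Finset.sum_congr rfl fun l _ => by ring
    · simp [hy]
  · simp [hx]

end

theorem coneC_polyhedral_representation_general (n m : ℕ) (s r : ℕ)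
    (G : Fin n → Fin n → Fin m → Fin m → ℝ) :
    (∀ μ : (Fin n ⊕ Fin m) →₀ ℕ,
      0 ≤ (biQuadPoly G * (∑ i : Fin n, X (Sum.inl i)) ^ s *
        (∑ j : Fin m, X (Sum.inr j)) ^ r).coeff μ) ↔
    (∀ ξ ∈ Finset.Nat.antidiagonalTuple n (s + 2),
     ∀ ζ ∈ Finset.Nat.antidiagonalTuple m (r + 2),
      0 ≤ (∑ i, ∑ j, ∑ k, ∑ l, G i j k l * (ξ i : ℝ) * (ξ j : ℝ) * (ζ k : ℝ) * (ζ l : ℝ))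
          - (∑ i, (ξ i : ℝ) * ∑ k, ∑ l, G i i k l * (ζ k : ℝ) * (ζ l : ℝ))
          - (∑ k, (ζ k : ℝ) * ∑ i, ∑ j, G i j k k * (ξ i : ℝ) * (ξ j : ℝ))
          + ∑ i, ∑ k, G i i k k * (ξ i : ℝ) * (ζ k : ℝ)) := by
  simp only [Finset.Nat.mem_antidiagonalTuple, ← biQuadFallingForm_eq]
  constructor
  · intro h ξ hξ ζ hζ
    have key := prod_factorial_mul_coeff_biQuadPoly_mul G s r
      (Finsupp.equivFunOnFinite.symm (Sum.elim ξ ζ))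
    simp only [Finsupp.coe_equivFunOnFinite_symm, Sum.elim_inl, Sum.elim_inr, hξ, hζ,
      and_self, if_true] at key
    have hweight : (0 : ℝ) < ((∏ i, (ξ i)! : ℕ) : ℝ) * ((∏ k, (ζ k)! : ℕ) : ℝ) := by positivity
    have hcoeff := mul_nonneg hweight.le (h (Finsupp.equivFunOnFinite.symm (Sum.elim ξ ζ)))
    rw [key] at hcoeff
    exact (mul_nonneg_iff_of_pos_left (by positivity)).mp hcoeff
  · intro h μ
    have hweight : (0 : ℝ) < ((∏ i, (μ (Sum.inl i))! : ℕ) : ℝ) *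
        ((∏ k, (μ (Sum.inr k))! : ℕ) : ℝ) := by positivity
    rw [← mul_nonneg_iff_of_pos_left hweight, prod_factorial_mul_coeff_biQuadPoly_mul]
    split_ifs with hdeg
    · exact mul_nonneg (by positivity) (h _ hdeg.1 _ hdeg.2)
    · exact le_rfl

/-- **polyhedral representation of `C_{n,m}^{s,r}`.** A partially symmetric
tensor `G` lies in `C_{n,m}^{s,r}` (i.e. `p_G(x,y)·(Σ_i x_i)^s·(Σ_j y_j)^r` has no negative
coefficients) if and only if finitely many linear inequalities, indexed by
`ξ ∈ I(n,s+2)` and `ζ ∈ I(m,r+2)`, hold. -/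
theorem coneC_polyhedral_representation (n m : ℕ) (hn : 0 < n) (hm : 0 < m) (s r : ℕ)
    (G : Fin n → Fin n → Fin m → Fin m → ℝ)
    (hsym : ∀ i j k l, G i j k l = G j i k l ∧ G j i k l = G j i l k) :
    (∀ μ : (Fin n ⊕ Fin m) →₀ ℕ,
      0 ≤ (biQuadPoly G * (∑ i : Fin n, X (Sum.inl i)) ^ s *
        (∑ j : Fin m, X (Sum.inr j)) ^ r).coeff μ) ↔
    (∀ ξ ∈ Finset.Nat.antidiagonalTuple n (s + 2),
     ∀ ζ ∈ Finset.Nat.antidiagonalTuple m (r + 2),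
      0 ≤ (∑ i, ∑ j, ∑ k, ∑ l, G i j k l * (ξ i : ℝ) * (ξ j : ℝ) * (ζ k : ℝ) * (ζ l : ℝ))
          - (∑ i, (ξ i : ℝ) * ∑ k, ∑ l, G i i k l * (ζ k : ℝ) * (ζ l : ℝ))
          - (∑ k, (ζ k : ℝ) * ∑ i, ∑ j, G i j k k * (ξ i : ℝ) * (ξ j : ℝ))
          + ∑ i, ∑ k, G i i k k * (ξ i : ℝ) * (ζ k : ℝ)) :=
  coneC_polyhedral_representation_general n m s r G
end

section
/- Let A = (a_{ijkl}) be a partially symmetric (2,2)-th order n×n×m×m tensor and let s, r be nonnegative integers. Then p_C^{(s,r)} = sup{λ ∈ ℝ : A − λE ∈ C_{n,m}^{s,r}} satisfies p_C^{(s,r)} = [(s+2)(r+2)/((s+1)(r+1))] · min{ p̄_A(x,y) : x ∈ Δ_n(s), y ∈ Δ_m(r) }, where p̄_A(x,y) = p_A(x,y) − (1/(s+2)) Σ_{i=1}^n x_i (Σ_{k,l=1}^m a_{iikl} y_k y_l) − (1/(r+2)) Σ_{k=1}^m y_k (Σ_{i,j=1}^n a_{ijkk} x_i x_j) + (1/((s+2)(r+2)))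 Σ_{i=1}^n Σ_{k=1}^m a_{iikk} x_i y_k; in particular the supremum defining p_C^{(s,r)} is attained. -/
/-!
The coefficient of `x^d y^e` in `p_{A-λE}(x,y) (∑ x)^s (∑ y)^r` vanishes unless `|d| = s + 2` and
`|e| = r + 2`, and then equals `multinomial d * multinomial e * (κ * p̄_A(d/(s+2), e/(r+2)) - λ)`
with `κ = (s+2)(r+2)/((s+1)(r+1))`. Two facts give this: the coefficient of `x^d` in
`x_i x_j (∑ x)^s` is `multinomial d * d_i (d_j - δ_ij) / ((s+2)(s+1))`, and `p̄_A` is the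
bi-quadratic form evaluated on the matrices `x_i x_j - δ_ij x_i/(s+2)`, whose entries sum to
`(s+1)/(s+2)` on the simplex. Hence `A - λE ∈ C^{s,r}` iff `λ ≤ κ p̄_A` on the finite grid
`Δ_n(s) × Δ_m(r)`, and the largest such `λ` is `κ` times the minimum of `p̄_A` on the grid.
-/

open MvPolynomial

/-- The modified bi-quadratic form `p̄_A` appearing in Theorem 4 of the paper. -/
noncomputable def pbar {n m : ℕ} (A : Fin n → Fin n → Fin m → Fin m → ℝ) (s r : ℕ)
    (x : Fin n → ℝ) (y : Fin m → ℝ) : ℝ :=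
  (∑ i, ∑ j, ∑ k, ∑ l, A i j k l * x i * x j * y k * y l)
    - (1 / ((s : ℝ) + 2)) * ∑ i, x i * ∑ k, ∑ l, A i i k l * y k * y l
    - (1 / ((r : ℝ) + 2)) * ∑ k, y k * ∑ i, ∑ j, A i j k k * x i * x j
    + (1 / (((s : ℝ) + 2) * ((r : ℝ) + 2))) * ∑ i, ∑ k, A i i k k * x i * y k

namespace Finsupp

theorem exists_eq_single_add {σ : Type*} {d : σ →₀ ℕ} {i : σ} (hi : d i ≠ 0) :
    ∃ d', d = single i 1 + d' :=
  ⟨d - single i 1, (add_tsub_cancel_of_le (by simpa [single_le_iff, Nat.one_le_iff_ne_zero])).symm⟩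

theorem multinomial_single_add_mul {α : Type*} (a : α) (d : α →₀ ℕ) :
    (single a 1 + d).multinomial * (d a + 1) = (d.degree + 1) * d.multinomial := by
  classical
  have hupd : (single a 1 + d).update a 0 = d.update a 0 := by
    ext b
    by_cases hb : b = a <;> simp [update_apply, hb]
  have hdeg : (single a 1 + d).degree = d.degree + 1 := by
    rw [map_add, degree_single, add_comm]
  rw [multinomial_update a (single a 1 + d), multinomial_update a d, hupd]
  change (single a 1 + d).degree.choose _ * _ * _ = (d.degree + 1) * (d.degree.choose (d a) * _)
  rw [hdeg, Finsupp.add_apply, single_eq_same, add_comm 1, mul_right_comm,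
    ← Nat.add_one_mul_choose_eq, mul_assoc]

end Finsupp

namespace MvPolynomial

open Finsupp

theorem coeff_X_mul_X_mul_sum_X_pow {R σ : Type*} [CommRing R] [Fintype σ] [DecidableEq σ]
    (s : ℕ) (i j : σ) (d : σ →₀ ℕ) :
    ((s + 2) * (s + 1) : R) * coeff d (X i * X j * (∑ t, X t) ^ s) =
      if d.degree = s + 2 then
        d.multinomial * ((d i : R) * ((d j : R) - if i = j then 1 else 0))
      else 0 := by
  rw [mul_assoc (X i)]
  by_cases hi : d i = 0
  · simp [coeff_X_mul', hi]
  obtain ⟨d₁, rfl⟩ := exists_eq_single_add hi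
  have hd₁j : (((single i 1 + d₁ : σ →₀ ℕ) j : ℕ) : R) - (if i = j then 1 else 0) = d₁ j := by
    by_cases h : i = j <;> simp [h]
  rw [coeff_X_mul, hd₁j]
  by_cases hj : d₁ j = 0
  · simp [coeff_X_mul', hj]
  obtain ⟨d₂, hd₂⟩ := exists_eq_single_add hj
  have hdeg₁ : d₁.degree = d₂.degree + 1 := by rw [hd₂, map_add, degree_single, add_comm]
  have hmult : (single i 1 + d₁).multinomial * ((single i 1 + d₁ : σ →₀ ℕ) i * d₁ j) =
      (d₂.degree + 2) * (d₂.degree + 1) * d₂.multinomial := by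
    have h₂ : d₁.multinomial * d₁ j = (d₂.degree + 1) * d₂.multinomial := by
      rw [hd₂, Finsupp.add_apply, single_eq_same, add_comm 1, multinomial_single_add_mul]
    rw [Finsupp.add_apply, single_eq_same, add_comm 1, ← mul_assoc, multinomial_single_add_mul,
      mul_assoc, h₂, hdeg₁]
    ring
  have hdeg : (single i 1 + d₁).degree = d₂.degree + 2 := by
    rw [map_add, degree_single, hdeg₁]; ring
  rw [hd₂, coeff_X_mul, coeff_sum_X_pow_of_fintype, ← hd₂, hdeg, ← Nat.cast_mul,
    ← Nat.cast_mul, hmult]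
  change _ * ((if d₂.degree = s then d₂.multinomial else 0 : ℕ) : R) = _
  by_cases hs : d₂.degree = s
  · subst hs
    push_cast
    simp
  · simp [hs]

theorem coeff_sumElim_rename_inl_mul_rename_inr {R σ τ : Type*} [CommSemiring R]
    (p : MvPolynomial σ R) (q : MvPolynomial τ R) (d : σ →₀ ℕ) (e : τ →₀ ℕ) :
    coeff (d.sumElim e) (rename Sum.inl p * rename Sum.inr q) = coeff d p * coeff e q := by
  classical
  induction p using MvPolynomial.induction_on' with
  | add p₁ p₂ hp₁ hp₂ => simp only [map_add, add_mul, coeff_add, hp₁, hp₂]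
  | monomial a c =>
    induction q using MvPolynomial.induction_on' with
    | add q₁ q₂ hq₁ hq₂ => simp only [map_add, mul_add, coeff_add, hq₁, hq₂]
    | monomial b c' =>
      have hinj : a.sumElim b = d.sumElim e ↔ a = d ∧ b = e := by
        simpa using (sumFinsuppEquivProdFinsupp (γ := ℕ)).symm.injective.eq_iff
          (a := (a, b)) (b := (d, e))
      rw [rename_monomial, rename_monomial, monomial_mul, ← sumElim_eq_add, coeff_monomial,
        coeff_monomial, coeff_monomial]
      simp only [hinj]
      by_cases ha : a = d <;> by_cases hb : b = e <;> simp [ha, hb]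

end MvPolynomial

open Finset

noncomputable def outerSubDiag {ι : Type*} [DecidableEq ι] (c : ℝ) (x : ι → ℝ) (i j : ι) : ℝ :=
  x i * x j - if i = j then x i / c else 0

theorem sum_outerSubDiag {ι : Type*} [Fintype ι] [DecidableEq ι] (c : ℝ) (x : ι → ℝ) :
    ∑ i, ∑ j, outerSubDiag c x i j = (∑ i, x i) ^ 2 - (∑ i, x i) / c := by
  simp [outerSubDiag, sum_sub_distrib, ← mul_sum, ← sum_mul, sum_div, sq]

theorem pbar_eq_sum_outerSubDiag {n m : ℕ} (G : Fin n → Fin n → Fin m → Fin m → ℝ) (s r : ℕ)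
    (x : Fin n → ℝ) (y : Fin m → ℝ) :
    pbar G s r x y = ∑ i, ∑ j, ∑ k, ∑ l,
      G i j k l * outerSubDiag (s + 2) x i j * outerSubDiag (r + 2) y k l := by
  have hy : ∑ k, y k * ∑ i, ∑ j, G i j k k * x i * x j
      = ∑ i, ∑ j, ∑ k, G i j k k * x i * x j * y k := by
    simp only [mul_sum]
    rw [sum_comm]
    refine sum_congr rfl fun i _ => ?_
    rw [sum_comm]
    exact sum_congr rfl fun j _ => sum_congr rfl fun k _ => by ring
  simp only [outerSubDiag, mul_sub, sub_mul, mul_ite, ite_mul, mul_zero, zero_mul, sum_sub_distrib,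
    sum_ite_eq, mem_univ, if_true, sum_ite_irrel, sum_const_zero]
  rw [pbar, hy, ← sub_add]
  simp only [mul_sum, one_div, mul_inv]
  refine congrArg₂ (· + ·) (congrArg₂ (· - ·) (congrArg₂ (· - ·) ?_ ?_) ?_) ?_ <;>
    repeat refine sum_congr rfl fun _ _ => ?_
  all_goals ring

theorem mul_pbar_sub_const {n m : ℕ} (A : Fin n → Fin n → Fin m → Fin m → ℝ) (s r : ℕ) (lam : ℝ)
    {x : Fin n → ℝ} {y : Fin m → ℝ} (hx : ∑ i, x i = 1) (hy : ∑ k, y k = 1) :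
    ((s : ℝ) + 2) * ((r : ℝ) + 2) / (((s : ℝ) + 1) * ((r : ℝ) + 1)) *
        pbar (fun i j k l => A i j k l - lam) s r x y =
      ((s : ℝ) + 2) * ((r : ℝ) + 2) / (((s : ℝ) + 1) * ((r : ℝ) + 1)) * pbar A s r x y - lam := by
  have hlam : ∑ i, ∑ j, ∑ k, ∑ l, lam * outerSubDiag (s + 2) x i j * outerSubDiag (r + 2) y k l
      = lam * ((s + 1) / (s + 2)) * ((r + 1) / (r + 2)) := by
    simp only [← mul_sum, ← sum_mul]
    rw [sum_outerSubDiag, sum_outerSubDiag, hx, hy]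
    field_simp
    ring
  rw [pbar_eq_sum_outerSubDiag, pbar_eq_sum_outerSubDiag]
  simp only [sub_mul, sum_sub_distrib, hlam]
  field_simp

noncomputable def gridPoint {ι : Type*} (s : ℕ) (d : ι →₀ ℕ) : ι → ℝ := fun i => d i / (s + 2)

theorem natCast_mul_sub_ite_eq_outerSubDiag {ι : Type*} [DecidableEq ι] (s : ℕ) (d : ι →₀ ℕ)
    (i j : ι) :
    (d i : ℝ) * ((d j : ℝ) - if i = j then 1 else 0) =
      (s + 2) ^ 2 * outerSubDiag (s + 2) (gridPoint s d) i j := by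
  simp only [outerSubDiag, gridPoint]
  split_ifs with h
  · subst h
    field_simp
  · field_simp
    ring

theorem coeff_X_mul_X_mul_sum_X_pow_eq_outerSubDiag {σ : Type*} [Fintype σ] [DecidableEq σ]
    (s : ℕ) (i j : σ) (d : σ →₀ ℕ) :
    coeff d (X i * X j * (∑ t, X t) ^ s : MvPolynomial σ ℝ) =
      if d.degree = s + 2 then
        d.multinomial * ((s + 2) / (s + 1)) * outerSubDiag (s + 2) (gridPoint s d) i j
      else 0 := by
  have h := coeff_X_mul_X_mul_sum_X_pow (R := ℝ) s i j d
  rw [natCast_mul_sub_ite_eq_outerSubDiag s] at h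
  apply mul_left_cancel₀ (by positivity : ((s : ℝ) + 2) * (s + 1) ≠ 0)
  rw [h]
  split_ifs
  · field_simp
  · rw [mul_zero]

theorem coeff_sumElim_biQuadPoly_mul {n m : ℕ} (G : Fin n → Fin n → Fin m → Fin m → ℝ)
    (s r : ℕ) (d : Fin n →₀ ℕ) (e : Fin m →₀ ℕ) :
    coeff (d.sumElim e) (biQuadPoly G * (∑ i : Fin n, X (Sum.inl i)) ^ s *
        (∑ j : Fin m, X (Sum.inr j)) ^ r) =
      if d.degree = s + 2 ∧ e.degree = r + 2 then
        d.multinomial * e.multinomial * (((s : ℝ) + 2) * ((r : ℝ) + 2) /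
          (((s : ℝ) + 1) * ((r : ℝ) + 1)) * pbar G s r (gridPoint s d) (gridPoint r e))
      else 0 := by
  have hterm : ∀ i j k l, C (G i j k l) * X (Sum.inl i) * X (Sum.inl j) * X (Sum.inr k) *
      X (Sum.inr l) * (∑ i : Fin n, X (Sum.inl i)) ^ s * (∑ j : Fin m, X (Sum.inr j)) ^ r =
      C (G i j k l) * (rename Sum.inl (X i * X j * (∑ t, X t) ^ s) *
        rename Sum.inr (X k * X l * (∑ t, X t) ^ r)) := by
    intro i j k l
    simp only [map_mul, map_pow, map_sum, rename_X]
    ring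
  simp only [biQuadPoly, sum_mul, hterm, coeff_sum, coeff_C_mul,
    coeff_sumElim_rename_inl_mul_rename_inr, coeff_X_mul_X_mul_sum_X_pow_eq_outerSubDiag]
  split_ifs
  · rw [pbar_eq_sum_outerSubDiag]
    simp only [mul_sum]
    refine sum_congr rfl fun i _ => sum_congr rfl fun j _ => sum_congr rfl fun k _ =>
      sum_congr rfl fun l _ => ?_
    field_simp
  all_goals simp_all

section Grid

variable {ι : Type*} [Fintype ι] {s : ℕ}

theorem gridPoint_mem_stdSimplex {d : ι →₀ ℕ} (hd : d.degree = s + 2) :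
    gridPoint s d ∈ stdSimplex ℝ ι := by
  refine ⟨fun i => by unfold gridPoint; positivity, ?_⟩
  rw [show ∑ i, gridPoint s d i = ∑ i, (d i : ℝ) / (s + 2) from rfl, ← sum_div, ← Nat.cast_sum,
    ← Finsupp.degree_eq_sum, hd]
  push_cast
  exact div_self (by positivity)

theorem exists_gridPoint_eq {x : ι → ℝ} (hx : x ∈ stdSimplex ℝ ι)
    (hgrid : ∀ i, ∃ t : ℕ, ((s : ℝ) + 2) * x i = t) :
    ∃ d : ι →₀ ℕ, d.degree = s + 2 ∧ gridPoint s d = x := by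
  choose t ht using hgrid
  refine ⟨Finsupp.equivFunOnFinite.symm t, ?_, ?_⟩
  · rw [Finsupp.degree_eq_sum]
    exact_mod_cast (show (∑ i, (t i : ℝ)) = s + 2 by
      rw [← sum_congr rfl fun i _ => ht i, ← mul_sum, hx.2, mul_one])
  · funext i
    simp only [gridPoint, Finsupp.coe_equivFunOnFinite_symm, ← ht i]
    field_simp

end Grid

theorem setOf_grid_pbar_eq_image2 {n m : ℕ} (A : Fin n → Fin n → Fin m → Fin m → ℝ) (s r : ℕ) :
    {v : ℝ | ∃ x ∈ stdSimplex ℝ (Fin n), ∃ y ∈ stdSimplex ℝ (Fin m),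
      (∀ i, ∃ t : ℕ, ((s : ℝ) + 2) * x i = t) ∧ (∀ k, ∃ t : ℕ, ((r : ℝ) + 2) * y k = t) ∧
      v = pbar A s r x y} =
    Set.image2 (fun d e => pbar A s r (gridPoint s d) (gridPoint r e))
      {d | d.degree = s + 2} {e | e.degree = r + 2} := by
  ext v
  constructor
  · rintro ⟨x, hx, y, hy, hxgrid, hygrid, rfl⟩
    obtain ⟨d, hd, rfl⟩ := exists_gridPoint_eq hx hxgrid
    obtain ⟨e, he, rfl⟩ := exists_gridPoint_eq hy hygrid
    exact ⟨d, hd, e, he, rfl⟩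
  · rintro ⟨d, hd, e, he, rfl⟩
    refine ⟨_, gridPoint_mem_stdSimplex hd, _, gridPoint_mem_stdSimplex he,
      fun i => ⟨d i, ?_⟩, fun k => ⟨e k, ?_⟩, rfl⟩ <;>
    exact mul_div_cancel₀ _ (by positivity)

theorem forall_coeff_nonneg_iff {n m : ℕ} (A : Fin n → Fin n → Fin m → Fin m → ℝ) (s r : ℕ)
    (lam : ℝ) :
    (∀ μ : (Fin n ⊕ Fin m) →₀ ℕ, 0 ≤ (biQuadPoly (fun i j k l => A i j k l - lam) *
        (∑ i : Fin n, X (Sum.inl i)) ^ s * (∑ j : Fin m, X (Sum.inr j)) ^ r).coeff μ) ↔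
      ∀ v ∈ Set.image2 (fun d e => pbar A s r (gridPoint s d) (gridPoint r e))
          {d | d.degree = s + 2} {e | e.degree = r + 2},
        lam ≤ ((s : ℝ) + 2) * ((r : ℝ) + 2) / (((s : ℝ) + 1) * ((r : ℝ) + 1)) * v := by
  have hcoeff : ∀ d e, coeff (d.sumElim e) (biQuadPoly (fun i j k l => A i j k l - lam) *
        (∑ i : Fin n, X (Sum.inl i)) ^ s * (∑ j : Fin m, X (Sum.inr j)) ^ r) =
      if d.degree = s + 2 ∧ e.degree = r + 2 then
        d.multinomial * e.multinomial * (((s : ℝ) + 2) * ((r : ℝ) + 2) /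
          (((s : ℝ) + 1) * ((r : ℝ) + 1)) * pbar A s r (gridPoint s d) (gridPoint r e) - lam)
      else 0 := by
    intro d e
    rw [coeff_sumElim_biQuadPoly_mul]
    split_ifs with h
    · rw [mul_pbar_sub_const A s r lam (gridPoint_mem_stdSimplex h.1).2
        (gridPoint_mem_stdSimplex h.2).2]
    · rfl
  simp only [Set.forall_mem_image2, Set.mem_ofPred_eq]
  constructor
  · intro H d hd e he
    have h := H (d.sumElim e)
    rw [hcoeff, if_pos ⟨hd, he⟩] at h
    exact sub_nonneg.1 (nonneg_of_mul_nonneg_right h (mul_pos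
      (Nat.cast_pos.2 (Nat.multinomial_pos _ _)) (Nat.cast_pos.2 (Nat.multinomial_pos _ _))))
  · intro H μ
    obtain ⟨⟨d, e⟩, rfl⟩ := Finsupp.sumFinsuppEquivProdFinsupp.symm.surjective μ
    rw [Finsupp.sumFinsuppEquivProdFinsupp_symm_apply, hcoeff]
    split_ifs with h
    · exact mul_nonneg (by positivity) (sub_nonneg.2 (H _ h.1 _ h.2))
    · rfl

theorem isGreatest_setOf_le_mul_csInf {S : Set ℝ} (hS : S.Finite) (hne : S.Nonempty) {κ : ℝ}
    (hκ : 0 ≤ κ) : IsGreatest {lam | ∀ v ∈ S, lam ≤ κ * v} (κ * sInf S) :=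
  ⟨fun _ hv => mul_le_mul_of_nonneg_left (csInf_le hS.bddBelow hv) hκ,
    fun _ h => h _ (hne.csInf_mem hS)⟩

theorem pC_eq_grid_min_general (n m : ℕ) (hn : 0 < n) (hm : 0 < m) (s r : ℕ)
    (A : Fin n → Fin n → Fin m → Fin m → ℝ) :
    IsGreatest {lam : ℝ | ∀ μ : (Fin n ⊕ Fin m) →₀ ℕ,
        0 ≤ (biQuadPoly (fun i j k l => A i j k l - lam) *
          (∑ i : Fin n, X (Sum.inl i)) ^ s * (∑ j : Fin m, X (Sum.inr j)) ^ r).coeff μ}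
      ((((s : ℝ) + 2) * ((r : ℝ) + 2) / (((s : ℝ) + 1) * ((r : ℝ) + 1))) *
        sInf {v : ℝ | ∃ x ∈ stdSimplex ℝ (Fin n), ∃ y ∈ stdSimplex ℝ (Fin m),
          (∀ i, ∃ t : ℕ, ((s : ℝ) + 2) * x i = t) ∧
          (∀ k, ∃ t : ℕ, ((r : ℝ) + 2) * y k = t) ∧
          v = pbar A s r x y}) := by
  have hgrid : ∀ {k : ℕ} (N : ℕ), 0 < k → {d : Fin k →₀ ℕ | d.degree = N}.Nonempty :=
    fun N hk => ⟨Finsupp.single ⟨0, hk⟩ N, Finsupp.degree_single _ _⟩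
  simp only [forall_coeff_nonneg_iff, setOf_grid_pbar_eq_image2]
  exact isGreatest_setOf_le_mul_csInf
    ((Finsupp.finite_of_degree_eq _).image2 _ (Finsupp.finite_of_degree_eq _))
    ((hgrid _ hn).image2 (hgrid _ hm)) (by positivity)

/-- **Theorem 4.** The value `p_C^{(s,r)} = sup{λ : A − λE ∈ C_{n,m}^{s,r}}`
is attained and equals `((s+2)(r+2))/((s+1)(r+1))` times the minimum of `p̄_A` over the
rational grid `Δ_n(s) × Δ_m(r)`. -/
theorem pC_eq_grid_min (n m : ℕ) (hn : 0 < n) (hm : 0 < m) (s r : ℕ)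
    (A : Fin n → Fin n → Fin m → Fin m → ℝ)
    (hsym : ∀ i j k l, A i j k l = A j i k l ∧ A j i k l = A j i l k) :
    IsGreatest {lam : ℝ | ∀ μ : (Fin n ⊕ Fin m) →₀ ℕ,
        0 ≤ (biQuadPoly (fun i j k l => A i j k l - lam) *
          (∑ i : Fin n, X (Sum.inl i)) ^ s * (∑ j : Fin m, X (Sum.inr j)) ^ r).coeff μ}
      ((((s : ℝ) + 2) * ((r : ℝ) + 2) / (((s : ℝ) + 1) * ((r : ℝ) + 1))) *
        sInf {v : ℝ | ∃ x ∈ stdSimplex ℝ (Fin n), ∃ y ∈ stdSimplex ℝ (Fin m),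
          (∀ i, ∃ t : ℕ, ((s : ℝ) + 2) * x i = t) ∧
          (∀ k, ∃ t : ℕ, ((r : ℝ) + 2) * y k = t) ∧
          v = pbar A s r x y}) :=
  pC_eq_grid_min_general n m hn hm s r A
end
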